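/- arXiv:1605.08840 — 4 statements merged into one kernel-verified Lean document; each statement's English description precedes it below -/
import Mathlib

section
/- Fix t ≥ 1 and values v : Fin t → ℝ with v τ ≥ 0, and constants V : Fin t → ℝ with V τ ≥ 0. Suppose sequences 𝔡, 𝔰 : Fin t → ℝ and bal : Fin (t+1) → ℝ satisfy: bal 0 = 0, bal (τ+1) = bal τ + 𝔡 τ - 𝔰 τ, 0 ≤ 𝔡 τ ≤ v τ, 𝔰 τ ≤ V τ, and 𝔰 τ ≤ bal τ, for all τ. Define bal*, s* by bal* 0 = 0, s* τ = min (bal* τ) (V τ), bal* (τ+1) = bal* τ + v τ - s* τ. Then ∑ τ, 𝔰 τ ≤ ∑ τ, s* τ. -/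
/-- Greedy spend-dominance lemma: depositing the full value and spending
`min (balance) (V τ)` at each stage maximizes cumulative spend among all
feasible deposit/spend sequences. -/
theorem greedy_spend_dominance (t : ℕ) (ht : 1 ≤ t)
    (v V : Fin t → ℝ) (hv : ∀ τ, 0 ≤ v τ) (hV : ∀ τ, 0 ≤ V τ)
    (dep sp : Fin t → ℝ) (bal : Fin (t + 1) → ℝ)
    (hbal0 : bal 0 = 0)
    (hbalrec : ∀ τ : Fin t, bal τ.succ = bal τ.castSucc + dep τ - sp τ)
    (hdep : ∀ τ : Fin t, 0 ≤ dep τ ∧ dep τ ≤ v τ)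
    (hspV : ∀ τ : Fin t, sp τ ≤ V τ)
    (hspbal : ∀ τ : Fin t, sp τ ≤ bal τ.castSucc)
    (balStar : Fin (t + 1) → ℝ) (sStar : Fin t → ℝ)
    (hbalStar0 : balStar 0 = 0)
    (hsStar : ∀ τ : Fin t, sStar τ = min (balStar τ.castSucc) (V τ))
    (hbalStarrec : ∀ τ : Fin t, balStar τ.succ = balStar τ.castSucc + v τ - sStar τ) :
    ∑ τ : Fin t, sp τ ≤ ∑ τ : Fin t, sStar τ := by
  classical
  -- ℕ-indexed versions (junk value 0 outside range)
  set sp' : ℕ → ℝ := fun n => if h : n < t then sp ⟨n, h⟩ else 0 with hsp'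
  set sStar' : ℕ → ℝ := fun n => if h : n < t then sStar ⟨n, h⟩ else 0 with hsStar'
  set d' : ℕ → ℝ := fun n => if h : n < t then dep ⟨n, h⟩ else 0 with hd'
  set v' : ℕ → ℝ := fun n => if h : n < t then v ⟨n, h⟩ else 0 with hv'
  -- closed form for bal
  have hbalcf : ∀ k (hk : k ≤ t), bal ⟨k, Nat.lt_succ_of_le hk⟩
      = ∑ n ∈ Finset.range k, (d' n - sp' n) := by
    intro k
    induction k with
    | zero => intro _; simpa using hbal0
    | succ k ih =>
      intro hk
      have hkt : k < t := hk
      have := hbalrec ⟨k, hkt⟩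
      simp only [Fin.succ, Fin.castSucc, Fin.castAdd, Fin.castLE] at this
      rw [show (⟨k + 1, Nat.lt_succ_of_le hk⟩ : Fin (t+1)) = ⟨k+1, by omega⟩ from rfl,
        this, ih (le_of_lt hkt), Finset.sum_range_succ]
      simp [hd', hsp', hkt]
      ring
  have hbalStarcf : ∀ k (hk : k ≤ t), balStar ⟨k, Nat.lt_succ_of_le hk⟩
      = ∑ n ∈ Finset.range k, (v' n - sStar' n) := by
    intro k
    induction k with
    | zero => intro _; simpa using hbalStar0
    | succ k ih =>
      intro hk
      have hkt : k < t := hk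
      have := hbalStarrec ⟨k, hkt⟩
      simp only [Fin.succ, Fin.castSucc, Fin.castAdd, Fin.castLE] at this
      rw [show (⟨k + 1, Nat.lt_succ_of_le hk⟩ : Fin (t+1)) = ⟨k+1, by omega⟩ from rfl,
        this, ih (le_of_lt hkt), Finset.sum_range_succ]
      simp [hv', hsStar', hkt]
      ring
  -- main induction
  have main : ∀ k, k ≤ t →
      ∑ n ∈ Finset.range k, sp' n ≤ ∑ n ∈ Finset.range k, sStar' n := by
    intro k
    induction k with
    | zero => intro _; simp
    | succ k ih =>
      intro hk
      have hkt : k < t := hk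
      have ih' := ih (le_of_lt hkt)
      rw [Finset.sum_range_succ, Finset.sum_range_succ]
      have hsp'k : sp' k = sp ⟨k, hkt⟩ := by simp [hsp', hkt]
      have hsS'k : sStar' k = sStar ⟨k, hkt⟩ := by simp [hsStar', hkt]
      have hcast : (⟨k, hkt⟩ : Fin t).castSucc = ⟨k, Nat.lt_succ_of_le hkt.le⟩ := rfl
      have hbalk := hbalcf k hkt.le
      have hbalStark := hbalStarcf k hkt.le
      -- bal k ≤ prefix v - prefix sp
      have hbal_le : bal ⟨k, Nat.lt_succ_of_le hkt.le⟩
          ≤ ∑ n ∈ Finset.range k, v' n - ∑ n ∈ Finset.range k, sp' n := by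
        rw [hbalk, Finset.sum_sub_distrib]
        have : ∑ n ∈ Finset.range k, d' n ≤ ∑ n ∈ Finset.range k, v' n := by
          apply Finset.sum_le_sum
          intro n hn
          have hnt : n < t := lt_of_lt_of_le (Finset.mem_range.mp hn) hkt.le
          simp [hd', hv', hnt, (hdep ⟨n, hnt⟩).2]
        linarith
      have hbalStar_eq : balStar ⟨k, Nat.lt_succ_of_le hkt.le⟩
          = ∑ n ∈ Finset.range k, v' n - ∑ n ∈ Finset.range k, sStar' n := by
        rw [hbalStark, Finset.sum_sub_distrib]
      have hmin := hsStar ⟨k, hkt⟩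
      rw [hcast] at hmin
      rcases min_cases (balStar ⟨k, Nat.lt_succ_of_le hkt.le⟩) (V ⟨k, hkt⟩) with
        ⟨heq, hle⟩ | ⟨heq, hle⟩
      · -- sStar k = balStar k
        have h1 := hspbal ⟨k, hkt⟩
        rw [hcast] at h1
        rw [hsp'k, hsS'k, hmin, heq, hbalStar_eq]
        linarith
      · -- sStar k = V k
        have h2 := hspV ⟨k, hkt⟩
        rw [hsp'k, hsS'k, hmin, heq]
        linarith
  have h1 : ∑ τ : Fin t, sp τ = ∑ n ∈ Finset.range t, sp' n := by
    rw [Finset.sum_range fun n => sp' n]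
    apply Finset.sum_congr rfl
    intro i _
    simp [hsp', i.isLt]
  have h2 : ∑ τ : Fin t, sStar τ = ∑ n ∈ Finset.range t, sStar' n := by
    rw [Finset.sum_range fun n => sStar' n]
    apply Finset.sum_congr rfl
    intro i _
    simp [hsStar', i.isLt]
  rw [h1, h2]
  exact main t le_rfl
end

section
/- With the greedy sequences of the spend-dominance setting (bal* 0 = 0, s* τ = min (bal* τ) (V τ), bal* (τ+1) = bal* τ + v τ - s* τ, with v τ, V τ ≥ 0), one has bal* τ ≥ 0 and s* τ ≥ 0 for all τ, and moreover if t' ≤ t is the largest index with s* t' = bal* t', then ∑_{τ < t} s* τ = ∑_{τ < t'} v τ + ∑_{t' < τ < t} V τ (where if no such index exists the identity holds with the convention t' = 0 and the first sum empty, replacing ∑_{τ<t'} v τ by bal* 0 = 0 appropriately). -/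
set_option maxRecDepth 4000

private lemma greedy_telescope (t : ℕ) (v : Fin t → ℝ)
    (balStar : Fin (t + 1) → ℝ) (sStar : Fin t → ℝ)
    (hbalStar0 : balStar 0 = 0)
    (hbalStarrec : ∀ τ : Fin t, balStar τ.succ = balStar τ.castSucc + v τ - sStar τ) :
    ∀ n : ℕ, (hn : n ≤ t) →
      ∑ τ ∈ Finset.univ.filter (fun τ : Fin t => (τ : ℕ) < n), sStar τ =
        (∑ τ ∈ Finset.univ.filter (fun τ : Fin t => (τ : ℕ) < n), v τ)
          - balStar ⟨n, by omega⟩ := by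
  intro n
  induction n with
  | zero =>
      intro _
      have h0 : (⟨0, by omega⟩ : Fin (t + 1)) = 0 := rfl
      simp [h0, hbalStar0]
  | succ n ih =>
      intro hn
      have hn' : n < t := by omega
      have hins : Finset.univ.filter (fun τ : Fin t => (τ : ℕ) < n + 1)
          = insert ⟨n, hn'⟩ (Finset.univ.filter (fun τ : Fin t => (τ : ℕ) < n)) := by
        ext τ
        simp [Fin.ext_iff]
        omega
      have hmem : (⟨n, hn'⟩ : Fin t) ∉ Finset.univ.filter (fun τ : Fin t => (τ : ℕ) < n) := by
        simp
      have hrec := hbalStarrec ⟨n, hn'⟩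
      have hsucc : (⟨n, hn'⟩ : Fin t).succ = (⟨n + 1, by omega⟩ : Fin (t + 1)) := rfl
      have hcast : (⟨n, hn'⟩ : Fin t).castSucc = (⟨n, by omega⟩ : Fin (t + 1)) := rfl
      rw [hsucc, hcast] at hrec
      rw [hins, Finset.sum_insert hmem, Finset.sum_insert hmem, ih (by omega)]
      linarith

/-- Closed form for the cumulative spend of the greedy bank account strategy:
balances and spends are nonnegative, and if `t'` is the largest index where the
whole balance is spent, then the total spend collects all values before `t'`
and attains the caps after `t'`. (Such an index always exists since
`s* 0 = bal* 0 = 0`.) -/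
theorem greedy_spend_closed_form (t : ℕ)
    (v V : Fin t → ℝ) (hv : ∀ τ, 0 ≤ v τ) (hV : ∀ τ, 0 ≤ V τ)
    (balStar : Fin (t + 1) → ℝ) (sStar : Fin t → ℝ)
    (hbalStar0 : balStar 0 = 0)
    (hsStar : ∀ τ : Fin t, sStar τ = min (balStar τ.castSucc) (V τ))
    (hbalStarrec : ∀ τ : Fin t, balStar τ.succ = balStar τ.castSucc + v τ - sStar τ) :
    (∀ τ : Fin (t + 1), 0 ≤ balStar τ) ∧
    (∀ τ : Fin t, 0 ≤ sStar τ) ∧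
    (∀ t' : Fin t,
      sStar t' = balStar t'.castSucc →
      (∀ τ : Fin t, t' < τ → sStar τ ≠ balStar τ.castSucc) →
      ∑ τ : Fin t, sStar τ =
        (∑ τ ∈ Finset.univ.filter (fun τ : Fin t => τ < t'), v τ) +
          ∑ τ ∈ Finset.univ.filter (fun τ : Fin t => t' < τ), V τ) := by
  have hbalnn : ∀ τ : Fin (t + 1), 0 ≤ balStar τ := by
    intro τ
    induction τ using Fin.induction with
    | zero => simp [hbalStar0]
    | succ i ih =>
        have h1 := hbalStarrec i
        have h2 := hsStar i
        have h3 : min (balStar i.castSucc) (V i) ≤ balStar i.castSucc := min_le_left _ _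
        have := hv i
        rw [h2] at h1
        linarith
  have hsnn : ∀ τ : Fin t, 0 ≤ sStar τ := by
    intro τ
    rw [hsStar τ]
    exact le_min (hbalnn _) (hV τ)
  refine ⟨hbalnn, hsnn, ?_⟩
  intro t' hs hmax
  -- after t', spends equal the caps
  have hafter : ∀ τ : Fin t, t' < τ → sStar τ = V τ := by
    intro τ hτ
    have hne := hmax τ hτ
    rcases le_total (balStar τ.castSucc) (V τ) with h | h
    · exact absurd (by rw [hsStar τ]; exact min_eq_left h) hne
    · rw [hsStar τ]; exact min_eq_right h
  -- split the sum at t'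
  have hsplit := Finset.sum_filter_add_sum_filter_not Finset.univ
    (fun τ : Fin t => τ ≤ t') sStar
  have hnotle : Finset.univ.filter (fun τ : Fin t => ¬ τ ≤ t')
      = Finset.univ.filter (fun τ : Fin t => t' < τ) := by
    ext τ; simp
  -- the "≤ t'" part via the telescoping identity
  have hle : Finset.univ.filter (fun τ : Fin t => τ ≤ t')
      = Finset.univ.filter (fun τ : Fin t => (τ : ℕ) < (t' : ℕ) + 1) := by
    ext τ
    simp only [Finset.mem_filter, Finset.mem_univ, true_and, Fin.le_def]
    omega
  have hkey := greedy_telescope t v balStar sStar hbalStar0 hbalStarrec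
    ((t' : ℕ) + 1) (by omega)
  have hins : Finset.univ.filter (fun τ : Fin t => (τ : ℕ) < (t' : ℕ) + 1)
      = insert t' (Finset.univ.filter (fun τ : Fin t => (τ : ℕ) < (t' : ℕ))) := by
    ext τ
    simp only [Finset.mem_insert, Finset.mem_filter, Finset.mem_univ, true_and, Fin.ext_iff]
    omega
  have hmem : t' ∉ Finset.univ.filter (fun τ : Fin t => (τ : ℕ) < (t' : ℕ)) := by simp
  have hrec := hbalStarrec t'
  have hsucc : t'.succ = (⟨(t' : ℕ) + 1, by omega⟩ : Fin (t + 1)) := rfl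
  rw [hsucc, hs] at hrec
  have hfirst : ∑ τ ∈ Finset.univ.filter (fun τ : Fin t => τ ≤ t'), sStar τ
      = ∑ τ ∈ Finset.univ.filter (fun τ : Fin t => (τ : ℕ) < (t' : ℕ)), v τ := by
    rw [hle, hkey, hins, Finset.sum_insert hmem]
    linarith
  have hsecond : ∑ τ ∈ Finset.univ.filter (fun τ : Fin t => t' < τ), sStar τ
      = ∑ τ ∈ Finset.univ.filter (fun τ : Fin t => t' < τ), V τ := by
    refine Finset.sum_congr rfl ?_
    intro τ hτ
    simp only [Finset.mem_filter] at hτ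
    exact hafter τ hτ.2
  have hltval : Finset.univ.filter (fun τ : Fin t => τ < t')
      = Finset.univ.filter (fun τ : Fin t => (τ : ℕ) < (t' : ℕ)) := by
    ext τ
    simp only [Finset.mem_filter, Finset.mem_univ, true_and, Fin.lt_def]
  rw [← hsplit, hnotle, hfirst, hsecond, hltval]
end

section
/- Under the equal-revenue distribution (P(v ≥ r) = 1/r for 1 ≤ r ≤ v_max, atom at v_max), a buyer with stage-1 value v₁ ≥ 1 who reports v'₁ ≥ 1 in the two-stage mechanism (stage-1 posted price 1, stage-1 deposit v'₁ - 1, stage-2 posted price v_max·e^{1-v'₁}) gets total expected utility v₁ - 1 - (v'₁ - 1) + (ln v_max - ln(v_max·e^{1-v'₁})) = v₁ - 1, independent of v'₁. Hence truthful reporting is optimal among reports v'₁ ≥ 1. -/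
/-- Incentive compatibility of the two-stage equal-revenue bank account
mechanism: for any report `v'₁ ≥ 1`, the buyer's total expected utility is
`v₁ - 1`, independent of the report; hence truthful reporting is optimal among
reports `v'₁ ≥ 1`. -/
theorem two_stage_bam_IC (vmax v₁ : ℝ) (hvmax : 1 < vmax) (hv₁ : 1 ≤ v₁) :
    (∀ v'₁ : ℝ, 1 ≤ v'₁ →
      (v₁ - 1) - (v'₁ - 1) +
          (Real.log vmax - Real.log (vmax * Real.exp (1 - v'₁))) = v₁ - 1) ∧
    (∀ v'₁ : ℝ, 1 ≤ v'₁ →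
      (v₁ - 1) - (v'₁ - 1) +
          (Real.log vmax - Real.log (vmax * Real.exp (1 - v'₁))) ≤
        (v₁ - 1) - (v₁ - 1) +
          (Real.log vmax - Real.log (vmax * Real.exp (1 - v₁)))) := by
  have key : ∀ v'₁ : ℝ, (v₁ - 1) - (v'₁ - 1) +
      (Real.log vmax - Real.log (vmax * Real.exp (1 - v'₁))) = v₁ - 1 := by
    intro v'₁
    rw [Real.log_mul (by positivity) (Real.exp_ne_zero _), Real.log_exp]
    ring
  exact ⟨fun v h => key v, fun v h => le_of_eq ((key v).trans (key v₁).symm)⟩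
end

section
/- Fix T and nonnegative sequences v, V : Fin T → ℝ. For σ ∈ ({0,1})^T define bal^σ, s^σ by bal^σ 0 = 0; if σ t = 0 then s^σ t = 0 and bal^σ (t+1) = bal^σ t + v t; if σ t = 1 then s^σ t = min (bal^σ t) (V t) and bal^σ (t+1) = bal^σ t - s^σ t. Let bal*, s* be the greedy sequences (bal* 0 = 0, s* t = min (bal* t) (V t), bal* (t+1) = bal* t + v t - s* t). Then for each t, the expectation over uniformly random σ of s^σ t is at least (1/4)·s* t. -/
/-- Balance of the strategy encoded by `σ`: at stage `τ`, if `σ τ = false`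
(give-for-free) deposit the full value `v τ`; if `σ τ = true` spend
`min (balance) (V τ)`. -/
noncomputable def balSig (v V : ℕ → ℝ) (σ : ℕ → Bool) : ℕ → ℝ
  | 0 => 0
  | (τ + 1) =>
    if σ τ then balSig v V σ τ - min (balSig v V σ τ) (V τ)
    else balSig v V σ τ + v τ

/-- Spend of the strategy encoded by `σ` at stage `t`. -/
noncomputable def sSig (v V : ℕ → ℝ) (σ : ℕ → Bool) (t : ℕ) : ℝ :=
  if σ t then min (balSig v V σ t) (V t) else 0

/-- Balance of the greedy strategy. -/
noncomputable def balGreedy (v V : ℕ → ℝ) : ℕ → ℝ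
  | 0 => 0
  | (τ + 1) => balGreedy v V τ + v τ - min (balGreedy v V τ) (V τ)

/-- Spend of the greedy strategy at stage `t`. -/
noncomputable def sGreedy (v V : ℕ → ℝ) (t : ℕ) : ℝ :=
  min (balGreedy v V t) (V t)

lemma balSig_congr (v V : ℕ → ℝ) (σ₁ σ₂ : ℕ → Bool) :
    ∀ τ, (∀ n, n < τ → σ₁ n = σ₂ n) → balSig v V σ₁ τ = balSig v V σ₂ τ
  | 0, _ => rfl
  | (τ+1), h => by
    have ih := balSig_congr v V σ₁ σ₂ τ (fun n hn => h n (Nat.lt_succ_of_lt hn))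
    simp only [balSig, ih, h τ (Nat.lt_succ_self τ)]

lemma balSig_nonneg (v V : ℕ → ℝ) (hv : ∀ n, 0 ≤ v n) (σ : ℕ → Bool) :
    ∀ τ, 0 ≤ balSig v V σ τ
  | 0 => le_refl 0
  | (τ+1) => by
    have ih := balSig_nonneg v V hv σ τ
    by_cases h : σ τ <;> simp only [balSig, h, if_true, if_false, Bool.false_eq_true]
    · have := min_le_left (balSig v V σ τ) (V τ); linarith
    · linarith [hv τ]

lemma helper (a b c w : ℝ) (ha : 0 ≤ a) (h : c ≤ a + b) :
    c - min c w ≤ a + (b - min b w) := by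
  rcases min_cases b w with ⟨h1, h2⟩ | ⟨h1, h2⟩ <;>
    rcases min_cases c w with ⟨h3, h4⟩ | ⟨h3, h4⟩ <;> linarith

lemma min_add_min (a b w : ℝ) (ha : 0 ≤ a) (hb : 0 ≤ b) (hw : 0 ≤ w) :
    min (a + b) w ≤ min a w + min b w := by
  have h1 := min_le_left (a + b) w
  have h2 := min_le_right (a + b) w
  rcases min_cases a w with ⟨h3, h4⟩ | ⟨h3, h4⟩ <;>
    rcases min_cases b w with ⟨h5, h6⟩ | ⟨h5, h6⟩ <;> linarith

lemma balGreedy_le (v V : ℕ → ℝ) (hv : ∀ n, 0 ≤ v n) (σ : ℕ → Bool) :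
    ∀ τ, balGreedy v V τ ≤ balSig v V σ τ + balSig v V (fun n => !σ n) τ
  | 0 => by simp [balGreedy, balSig]
  | (τ+1) => by
    have ih := balGreedy_le v V hv σ τ
    have ha := balSig_nonneg v V hv σ τ
    have hb := balSig_nonneg v V hv (fun n => !σ n) τ
    by_cases h : σ τ
    · simp only [balGreedy, balSig, h, Bool.not_true, if_true, if_false, Bool.false_eq_true]
      have := helper (balSig v V (fun n => !σ n) τ) (balSig v V σ τ)
        (balGreedy v V τ) (V τ) hb (by linarith)
      linarith
    · simp only [balGreedy, balSig, h, Bool.not_false, if_true, if_false, Bool.false_eq_true]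
      have := helper (balSig v V σ τ) (balSig v V (fun n => !σ n) τ)
        (balGreedy v V τ) (V τ) ha (by linarith)
      linarith

lemma pair_spend (v V : ℕ → ℝ) (hv : ∀ n, 0 ≤ v n) (hV : ∀ n, 0 ≤ V n)
    (σ₁ σ₂ : ℕ → Bool) (t : ℕ) (h1 : σ₁ t = true) (h2 : σ₂ t = true)
    (hflip : ∀ n, n < t → σ₂ n = !σ₁ n) :
    sGreedy v V t ≤ sSig v V σ₁ t + sSig v V σ₂ t := by
  have hb2 : balSig v V σ₂ t = balSig v V (fun n => !σ₁ n) t :=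
    balSig_congr v V σ₂ (fun n => !σ₁ n) t hflip
  have hkey := balGreedy_le v V hv σ₁ t
  have ha := balSig_nonneg v V hv σ₁ t
  have hb := balSig_nonneg v V hv (fun n => !σ₁ n) t
  simp only [sSig, sGreedy, h1, h2, if_true, hb2]
  calc min (balGreedy v V t) (V t)
      ≤ min (balSig v V σ₁ t + balSig v V (fun n => !σ₁ n) t) (V t) :=
        min_le_min_right _ hkey
    _ ≤ _ := min_add_min _ _ _ ha hb (hV t)


/-- Derandomization lemma: for each stage `t`, the expected spend at stage `t`
over a uniformly random bit string `σ ∈ {0,1}^T` is at least a quarter of the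
greedy spend. -/
theorem random_sigma_spend_bound (T : ℕ) (v V : ℕ → ℝ)
    (hv : ∀ n, 0 ≤ v n) (hV : ∀ n, 0 ≤ V n)
    (t : ℕ) (ht : t < T) :
    (1 / 4 : ℝ) * sGreedy v V t ≤
      (∑ σ : Fin T → Bool,
          sSig v V (fun n => if h : n < T then σ ⟨n, h⟩ else false) t) /
        2 ^ T := by
  classical
  set ext : (Fin T → Bool) → ℕ → Bool :=
    fun σ n => if h : n < T then σ ⟨n, h⟩ else false with hext
  set i : Fin T := ⟨t, ht⟩ with hi
  set A : Finset (Fin T → Bool) := Finset.univ.filter (fun σ => σ i = true) with hA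
  set e : (Fin T → Bool) → (Fin T → Bool) :=
    fun σ j => if (j : ℕ) < t then !σ j else σ j with he
  have hinv : Function.Involutive e := by
    intro σ; funext j; simp only [he]; by_cases hj : (j : ℕ) < t <;> simp [hj]
  have heA : ∀ σ, e σ ∈ A ↔ σ ∈ A := by
    intro σ
    simp only [hA, Finset.mem_filter, Finset.mem_univ, true_and, he, hi]
    simp
  -- nonnegativity of each term
  have hnn : ∀ σ : Fin T → Bool, 0 ≤ sSig v V (ext σ) t := by
    intro σ
    unfold sSig
    split
    · exact le_min (balSig_nonneg v V hv _ t) (hV t)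
    · exact le_refl 0
  have hs0 : 0 ≤ sGreedy v V t :=
    le_min (by
      have : ∀ τ, 0 ≤ balGreedy v V τ := by
        intro τ; induction τ with
        | zero => exact le_refl 0
        | succ n ih =>
          have := min_le_left (balGreedy v V n) (V n)
          simp only [balGreedy]; linarith [hv n]
      exact this t) (hV t)
  -- pairing bound on A
  have hpair : ∀ σ ∈ A, sGreedy v V t ≤ sSig v V (ext σ) t + sSig v V (ext (e σ)) t := by
    intro σ hσ
    simp only [hA, Finset.mem_filter, Finset.mem_univ, true_and] at hσ
    refine pair_spend v V hv hV _ _ t ?_ ?_ ?_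
    · simp only [hext]; rw [dif_pos ht]; exact hσ
    · simp only [hext]; rw [dif_pos ht]
      simp only [he]; rw [if_neg (lt_irrefl t)]; exact hσ
    · intro n hn
      have hnT : n < T := hn.trans ht
      simp only [hext]
      rw [dif_pos hnT, dif_pos hnT]
      simp only [he]
      rw [if_pos hn]
  -- sum over A of the flipped terms equals sum over A
  have hsum_e : ∑ σ ∈ A, sSig v V (ext (e σ)) t = ∑ σ ∈ A, sSig v V (ext σ) t := by
    refine Finset.sum_equiv hinv.toPerm (fun σ => ?_) (fun σ _ => ?_)
    · exact (heA σ).symm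
    · rfl
  -- card of A
  have hcard : 2 * A.card = 2 ^ T := by
    have hbij : A.card =
        (Finset.univ.filter (fun σ : Fin T → Bool => ¬σ i = true)).card := by
      refine Finset.card_nbij' (fun σ => Function.update σ i false)
        (fun σ => Function.update σ i true) ?_ ?_ ?_ ?_
      · intro σ hσ
        simp [Function.update_self]
      · intro σ hσ
        simp [hA, Function.update_self]
      · intro σ hσ
        simp only [hA, Finset.mem_coe, Finset.mem_filter, Finset.mem_univ, true_and] at hσ
        funext j
        by_cases hj : j = i
        · subst hj; simp [Function.update_self, hσ]
        · simp [Function.update_of_ne hj]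
      · intro σ hσ
        simp only [Finset.mem_coe, Finset.mem_filter, Finset.mem_univ, true_and,
          Bool.not_eq_true] at hσ
        funext j
        by_cases hj : j = i
        · subst hj; simp [Function.update_self, hσ]
        · simp [Function.update_of_ne hj]
    have hsplit : (Finset.univ.filter (fun σ : Fin T → Bool => σ i = true)).card +
        (Finset.univ.filter (fun σ : Fin T → Bool => ¬σ i = true)).card = 2 ^ T := by
      rw [Finset.card_filter_add_card_filter_not]
      simp [Finset.card_univ]
    rw [two_mul]
    nth_rewrite 2 [hbij]
    rw [hA]
    exact hsplit
  -- assemble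
  have h1 : (A.card : ℝ) * sGreedy v V t ≤ 2 * ∑ σ ∈ A, sSig v V (ext σ) t := by
    have := Finset.sum_le_sum hpair
    rw [Finset.sum_add_distrib, hsum_e, Finset.sum_const, nsmul_eq_mul] at this
    linarith
  have h2 : ∑ σ ∈ A, sSig v V (ext σ) t ≤ ∑ σ : Fin T → Bool, sSig v V (ext σ) t :=
    Finset.sum_le_sum_of_subset_of_nonneg (Finset.filter_subset _ _)
      (fun σ _ _ => hnn σ)
  have hc : (2 : ℝ) ^ T = 2 * (A.card : ℝ) := by
    exact_mod_cast hcard.symm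
  rw [le_div_iff₀ (by positivity : (0:ℝ) < 2 ^ T), hc]
  nlinarith [h1, h2, hs0]
end
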